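/- With ψ(s) = −1/20 + (2/5)e^{−3s} − (9/10)e^{−2s} + (1/2)e^{−s}, one has 5·∫₀^∞ ψ(x)·e^{−x}·(1 + log x − x·log x) dx = log 3 − (11/8)·log 2 (which is log(3/2^{11/8})), where the integrand arises from the Weibull alternative density g(x,θ) = (1+θ)x^θ e^{−x^{1+θ}} via h(x) = ∂g/∂θ(x,0) = e^{−x}(1 + log x − x·log x). -/

import Mathlib

/-!
Expanding `ψ(x) e^{-x}` in powers of `e^{-x}` reduces the integral to the Laplace transforms
`∫₀^∞ e^{-ax} (1 + log x - x log x) dx = (1 - γ - log a)(a - 1)/a²` at `a = 1, 2, 3, 4`.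
After the substitution `y = a x` these come from `Γ(1) = Γ(2) = 1` and from
`Γ'(s) = ∫₀^∞ t^{s-1} log t e^{-t} dt` at `s = 1, 2`, where `Γ'(1) = -γ` and `Γ'(2) = 1 - γ`.
The Euler–Mascheroni constant drops out because `∑ c_a (a - 1)/a² = 0` for the coefficients
`c_a` of `ψ(x) e^{-x}`.
-/

open Real MeasureTheory Set Filter Asymptotics

/-- The projection `ψ` from the paper. -/
noncomputable def psi (s : ℝ) : ℝ :=
  -1/20 + (2/5) * exp (-(3*s)) - (9/10) * exp (-(2*s)) + (1/2) * exp (-s)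

local notation "γ" => eulerMascheroniConstant

lemma ofReal_rpow_mul_log_mul_exp_neg {s t : ℝ} (ht : 0 ≤ t) :
    (((t ^ (s - 1) * (log t * exp (-t)) : ℝ)) : ℂ)
      = (t : ℂ) ^ ((s : ℂ) - 1) * (log t * exp (-t)) := by
  push_cast [Complex.ofReal_cpow ht]
  rfl

theorem integrableOn_rpow_mul_log_mul_exp_neg {s : ℝ} (hs : 0 < s) :
    IntegrableOn (fun t : ℝ ↦ t ^ (s - 1) * (log t * exp (-t))) (Ioi 0) := by
  have hexp : Continuous fun t : ℝ ↦ (exp (-t) : ℂ) := by fun_prop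
  have h := (mellin_hasDerivAt_of_isBigO_rpow (E := ℂ) (f := fun t ↦ (exp (-t) : ℂ)) (s := s)
    (hexp.continuousOn.locallyIntegrableOn measurableSet_Ioi) ?_ (lt_add_one (s : ℂ).re) ?_
    (by simpa using hs)).1
  · have h' : IntegrableOn (fun t : ℝ ↦ ((t ^ (s - 1) * (log t * exp (-t)) : ℝ) : ℂ)) (Ioi 0) :=
      h.congr_fun (fun t ht ↦ (ofReal_rpow_mul_log_mul_exp_neg (le_of_lt ht)).symm)
        measurableSet_Ioi
    simpa only [IntegrableOn, RCLike.re_to_complex, Complex.ofReal_re] using h'.re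
  · rw [← isBigO_norm_left]
    simpa only [Complex.norm_real, isBigO_norm_left, neg_one_mul]
      using (isLittleO_exp_neg_mul_rpow_atTop zero_lt_one _).isBigO
  · simp_rw [neg_zero, rpow_zero]
    refine isBigO_const_of_tendsto (?_ : Tendsto _ _ (nhds (1 : ℂ))) one_ne_zero
    simpa using (hexp.tendsto 0).mono_left nhdsWithin_le_nhds

theorem hasDerivAt_Gamma_integral {s : ℝ} (hs : 0 < s) :
    HasDerivAt Gamma (∫ t in Ioi 0, t ^ (s - 1) * (log t * exp (-t))) s := by
  have h := (Complex.hasDerivAt_GammaIntegral (s := s) (by simpa using hs)).real_of_complex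
  rw [← setIntegral_congr_fun measurableSet_Ioi
    fun t ht ↦ ofReal_rpow_mul_log_mul_exp_neg (le_of_lt ht), integral_complex_ofReal,
    Complex.ofReal_re] at h
  refine h.congr_of_eventuallyEq ?_
  filter_upwards [eventually_gt_nhds hs] with x hx
  rw [← Complex.Gamma_eq_integral (by simpa using hx), Complex.Gamma_ofReal, Complex.ofReal_re]

lemma rpow_mul_log_mul_exp_neg_mul_eq {s a t : ℝ} (ha : 0 < a) (ht : 0 < t) :
    t ^ (s - 1) * (log t * exp (-(a * t))) = a ^ (1 - s) * ((a * t) ^ (s - 1) *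
      (log (a * t) * exp (-(a * t))) - log a * (exp (-(a * t)) * (a * t) ^ (s - 1))) := by
  have hpow : a ^ (1 - s) * (a * t) ^ (s - 1) = t ^ (s - 1) := by
    rw [mul_rpow ha.le ht.le, ← mul_assoc, ← rpow_add ha]
    simp
  rw [log_mul ha.ne' ht.ne', ← hpow]
  ring

theorem integrableOn_rpow_mul_log_mul_exp_neg_mul {s a : ℝ} (hs : 0 < s) (ha : 0 < a) :
    IntegrableOn (fun t : ℝ ↦ t ^ (s - 1) * (log t * exp (-(a * t)))) (Ioi 0) := by
  have hg : IntegrableOn (fun y : ℝ ↦ y ^ (s - 1) * (log y * exp (-y))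
      - log a * (exp (-y) * y ^ (s - 1))) (Ioi (a * 0)) := by
    rw [mul_zero]
    exact (integrableOn_rpow_mul_log_mul_exp_neg hs).sub
      ((GammaIntegral_convergent hs).const_mul _)
  refine IntegrableOn.congr_fun ?_
    (fun t ht ↦ (rpow_mul_log_mul_exp_neg_mul_eq ha ht).symm) measurableSet_Ioi
  exact ((integrableOn_Ioi_comp_mul_left_iff _ 0 ha).2 hg).const_mul _

theorem integral_rpow_mul_log_mul_exp_neg_mul {s a : ℝ} (hs : 0 < s) (ha : 0 < a) :
    ∫ t in Ioi 0, t ^ (s - 1) * (log t * exp (-(a * t)))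
      = (deriv Gamma s - log a * Gamma s) / a ^ s := by
  rw [setIntegral_congr_fun measurableSet_Ioi fun t ht ↦ rpow_mul_log_mul_exp_neg_mul_eq ha ht,
    integral_const_mul, integral_comp_mul_left_Ioi (fun y ↦ y ^ (s - 1) * (log y * exp (-y))
    - log a * (exp (-y) * y ^ (s - 1))) 0 ha, mul_zero, integral_sub
    (integrableOn_rpow_mul_log_mul_exp_neg hs) ((GammaIntegral_convergent hs).const_mul _),
    integral_const_mul, ← Gamma_eq_integral hs, ← (hasDerivAt_Gamma_integral hs).deriv,
    smul_eq_mul, rpow_sub ha, rpow_one]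
  field_simp

lemma integrableOn_exp_neg_mul {a : ℝ} (ha : 0 < a) :
    IntegrableOn (fun x : ℝ ↦ exp (-(a * x))) (Ioi 0) := by
  simpa using exp_neg_integrableOn_Ioi 0 ha

lemma integrableOn_log_mul_exp_neg_mul {a : ℝ} (ha : 0 < a) :
    IntegrableOn (fun t : ℝ ↦ log t * exp (-(a * t))) (Ioi 0) := by
  simpa using integrableOn_rpow_mul_log_mul_exp_neg_mul one_pos ha

lemma integrableOn_mul_log_mul_exp_neg_mul {a : ℝ} (ha : 0 < a) :
    IntegrableOn (fun t : ℝ ↦ t * (log t * exp (-(a * t)))) (Ioi 0) := by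
  simpa using integrableOn_rpow_mul_log_mul_exp_neg_mul (s := 1 + 1) (by norm_num) ha

lemma integral_log_mul_exp_neg_mul {a : ℝ} (ha : 0 < a) :
    ∫ t in Ioi 0, log t * exp (-(a * t)) = -(γ + log a) / a := by
  have h := integral_rpow_mul_log_mul_exp_neg_mul one_pos ha
  rw [hasDerivAt_Gamma_one.deriv, Gamma_one] at h
  norm_num at h
  rw [h]
  ring

lemma integral_mul_log_mul_exp_neg_mul {a : ℝ} (ha : 0 < a) :
    ∫ t in Ioi 0, t * (log t * exp (-(a * t))) = (1 - γ - log a) / a ^ 2 := by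
  have h := integral_rpow_mul_log_mul_exp_neg_mul (s := 1 + 1) (by norm_num) ha
  have hd := deriv_Gamma_nat 1
  push_cast at hd
  rw [hd, one_add_one_eq_two, Gamma_two] at h
  norm_num at h
  rw [h]
  ring

lemma exp_neg_mul_mul_one_add_log_sub_mul_log (a x : ℝ) :
    exp (-(a * x)) * (1 + log x - x * log x)
      = exp (-(a * x)) + log x * exp (-(a * x)) - x * (log x * exp (-(a * x))) := by
  ring

lemma integrableOn_exp_neg_mul_mul_one_add_log_sub_mul_log {a : ℝ} (ha : 0 < a) :
    IntegrableOn (fun x : ℝ ↦ exp (-(a * x)) * (1 + log x - x * log x)) (Ioi 0) := by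
  simp_rw [exp_neg_mul_mul_one_add_log_sub_mul_log]
  exact ((integrableOn_exp_neg_mul ha).fun_add (integrableOn_log_mul_exp_neg_mul ha)).fun_sub
    (integrableOn_mul_log_mul_exp_neg_mul ha)

theorem integral_exp_neg_mul_mul_one_add_log_sub_mul_log {a : ℝ} (ha : 0 < a) :
    ∫ x in Ioi 0, exp (-(a * x)) * (1 + log x - x * log x)
      = (1 - γ - log a) * (a - 1) / a ^ 2 := by
  have hexp := integral_exp_mul_Ioi (neg_neg_of_pos ha) 0
  simp only [neg_mul, mul_zero, exp_zero] at hexp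
  simp_rw [exp_neg_mul_mul_one_add_log_sub_mul_log]
  rw [integral_sub ((integrableOn_exp_neg_mul ha).fun_add (integrableOn_log_mul_exp_neg_mul ha))
      (integrableOn_mul_log_mul_exp_neg_mul ha),
    integral_add (integrableOn_exp_neg_mul ha) (integrableOn_log_mul_exp_neg_mul ha),
    hexp, integral_log_mul_exp_neg_mul ha, integral_mul_log_mul_exp_neg_mul ha]
  field_simp
  ring

lemma psi_mul_exp_neg (x : ℝ) :
    psi x * exp (-x) = ∑ k : Fin 4, ![-1/20, 1/2, -9/10, 2/5] k * exp (-((k + 1 : ℝ) * x)) := by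
  have hpow (n : ℕ) : exp (-(n * x)) = exp (-x) ^ n := by
    rw [← exp_nat_mul, mul_neg]
  have h2 := hpow 2
  have h3 := hpow 3
  have h4 := hpow 4
  push_cast at h2 h3 h4
  norm_num [psi, Fin.sum_univ_four, Matrix.cons_val_zero, Matrix.cons_val_one,
    Matrix.cons_val_two, Matrix.cons_val_three, h2, h3, h4]
  ring

/-- `5·∫₀^∞ ψ(x)·e^{−x}·(1 + log x − x·log x) dx = log 3 − (11/8)·log 2`,
where `h(x) = e^{−x}(1 + log x − x log x)` is the θ-derivative at `θ = 0` of the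
Weibull density. -/
theorem stmt_10 :
    5 * (∫ x in Ioi (0:ℝ), psi x * (exp (-x) * (1 + log x - x * log x))) =
      log 3 - (11/8) * log 2 := by
  have hsum (x : ℝ) : psi x * (exp (-x) * (1 + log x - x * log x)) = ∑ k : Fin 4,
      ![-1/20, 1/2, -9/10, 2/5] k * (exp (-((k + 1 : ℝ) * x)) * (1 + log x - x * log x)) := by
    simp only [← mul_assoc, psi_mul_exp_neg, Finset.sum_mul]
  simp_rw [hsum]
  rw [integral_finsetSum _ fun k _ ↦
    (integrableOn_exp_neg_mul_mul_one_add_log_sub_mul_log (by positivity)).const_mul _]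
  simp_rw [integral_const_mul,
    integral_exp_neg_mul_mul_one_add_log_sub_mul_log (Nat.cast_add_one_pos _)]
  have hlog4 : log 4 = 2 * log 2 := by
    rw [show (4 : ℝ) = 2 ^ 2 by norm_num, log_pow, Nat.cast_ofNat]
  norm_num [Fin.sum_univ_four, Matrix.cons_val_zero, Matrix.cons_val_one,
    Matrix.cons_val_two, Matrix.cons_val_three, hlog4]
  ring
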